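/- Let n, m ≥ 1, s ≥ 2, w ≥ 1, and 1 ≤ t ≤ s. If the bit-vector testing problem with parameters n, m has (s,w,t)-certificates, then for every real δ with 0 < δ < 1, either t ≥ n^{1−δ}/(w + log₂ s) or t ≥ δ·m·log₂ n / log₂ s. -/

import Mathlib

/-- `f` has `(s,w,t)`-certificates: there is a code `T : Y → Σ^s` with alphabet
`Σ = {0,1}^w` such that for every query `x` and database `y` some set `P` of at
most `t` cells determines the answer `f (x, y)`. -/
def HasCertificates {X Y Z : Type*} (f : X × Y → Z) (s w t : ℕ) : Prop :=
  ∃ T : Y → Fin s → (Fin w → Bool),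
    ∀ x : X, ∀ y : Y, ∃ P : Finset (Fin s), P.card ≤ t ∧
      ∀ y' : Y, (∀ i ∈ P, T y' i = T y i) → f (x, y') = f (x, y)

/-- The bit-vector testing problem with parameters `n, m`: a database is a bit-vector
`y ∈ {0,1}^n`, a query is a pair `(u, v)` of an `m`-tuple of positions and a prediction,
and the answer is `1` iff `y (u j) = v j` for every `j`. -/
def bvTest (n m : ℕ) : ((Fin m → Fin n) × (Fin m → Bool)) × (Fin n → Bool) → Fin 2 :=
  fun p => if ∀ j : Fin m, p.2 (p.1.1 j) = p.1.2 j then 1 else 0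

/-!
Fix the code `T` and a database `y`. The query `(u, y ∘ u)` has answer `1`, so its certificate
determines every `y (u j)`: each `u : Fin m → Fin n` lies in the set of coordinates fixed by some
`t` cells. Counting the `n ^ m` tuples against the `s ^ t` cell sequences, some sequence fixes
`F` coordinates with `n ^ m ≤ F ^ m s ^ t`, so `F > n ^ (1 - δ)` unless `t log s ≥ δ m log n`.
Conversely, the addresses and contents of those cells, `t (log s + w)` bits, determine `y` on the
`F` fixed coordinates; for the database with the fewest of them this forces `F ≤ t (w + log s)`.
-/

open Finset Fintype

section CellCode

variable {ι α κ σ : Type*}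

lemma exists_fin_range_superset [Nonempty κ] {t : ℕ} {P : Finset κ} (hP : #P ≤ t) :
    ∃ e : Fin t → κ, ↑P ⊆ Set.range e := by
  refine ⟨fun k => if hk : (k : ℕ) < #P then P.equivFin.symm ⟨k, hk⟩ else Classical.arbitrary κ,
    fun i hi => ⟨Fin.castLE hP (P.equivFin ⟨i, hi⟩), ?_⟩⟩
  simp

open Classical in
/-- Cells are read as a sequence `e : Fin t → κ` (repetitions allowed), so that what a
certificate reads is an element of `(Fin t → κ) × (Fin t → σ)`. -/
noncomputable def fixedCoords [Fintype ι] (T : (ι → α) → κ → σ) (y : ι → α) {t : ℕ}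
    (e : Fin t → κ) : Finset ι :=
  {i | ∀ y', (∀ k, T y' (e k) = T y (e k)) → y' i = y i}

lemma mem_fixedCoords [Fintype ι] {T : (ι → α) → κ → σ} {y : ι → α} {t : ℕ} {e : Fin t → κ}
    {i : ι} : i ∈ fixedCoords T y e ↔ ∀ y', (∀ k, T y' (e k) = T y (e k)) → y' i = y i := by
  simp [fixedCoords]

lemma card_le_of_forall_eqOn [Fintype ι] [Fintype α] (S : Finset ι) (y₀ : ι → α)
    (A : Finset (ι → α)) (hA : ∀ y ∈ A, Set.EqOn y y₀ S) : #A ≤ card α ^ (card ι - #S) := by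
  classical
  calc #A ≤ #(univ : Finset (↥Sᶜ → α)) :=
        card_le_card_of_injOn (fun y i => y i) (fun _ _ => mem_coe.2 (mem_univ _))
          fun y hy y' hy' h => by
            funext i
            by_cases hi : i ∈ S
            · rw [hA y hy hi, hA y' hy' hi]
            · exact congrFun h ⟨i, mem_compl.2 hi⟩
    _ = card α ^ (card ι - #S) := by simp

lemma exists_cells_card_pow_le [Fintype ι] [Fintype κ] [Nonempty κ] {m t : ℕ}
    (T : (ι → α) → κ → σ) (y : ι → α)
    (hcov : ∀ u : Fin m → ι, ∃ e : Fin t → κ, ∀ j, u j ∈ fixedCoords T y e) :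
    ∃ e : Fin t → κ, card ι ^ m ≤ #(fixedCoords T y e) ^ m * card κ ^ t := by
  classical
  choose g hg using hcov
  obtain ⟨e, -, he⟩ := exists_max_image univ (fun e : Fin t → κ => #(fixedCoords T y e))
    univ_nonempty
  refine ⟨e, ?_⟩
  have key := card_le_mul_card_image_of_maps_to (s := univ) (t := univ) (f := g)
    (fun _ _ => mem_univ _) (#(fixedCoords T y e) ^ m) fun e' _ => ?_
  · simpa using key
  calc #{u | g u = e'} ≤ #(piFinset fun _ : Fin m => fixedCoords T y e') :=
        card_le_card fun u hu => mem_piFinset.2 fun j => (mem_filter.1 hu).2 ▸ hg u j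
    _ = #(fixedCoords T y e') ^ m := by simp
    _ ≤ #(fixedCoords T y e) ^ m := Nat.pow_le_pow_left (he e' (mem_univ _)) m

lemma exists_pow_card_fixedCoords_le [Fintype ι] [Fintype α] [Nonempty α] [Fintype κ]
    [Fintype σ] {t : ℕ} (T : (ι → α) → κ → σ) (e : (ι → α) → Fin t → κ) :
    ∃ y, card α ^ #(fixedCoords T y (e y)) ≤ card κ ^ t * card σ ^ t := by
  classical
  obtain ⟨y₀, -, hmin⟩ :=
    exists_min_image univ (fun y => #(fixedCoords T y (e y))) univ_nonempty
  refine ⟨y₀, ?_⟩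
  set M := #(fixedCoords T y₀ (e y₀))
  let Φ y := (e y, fun k => T y (e y k))
  have hfiber : ∀ b ∈ univ, #{y | Φ y = b} ≤ card α ^ (card ι - M) := by
    intro b _
    obtain hb | ⟨y₁, hy₁⟩ := eq_empty_or_nonempty {y | Φ y = b}
    · simp [hb]
    refine (card_le_of_forall_eqOn _ y₁ _ fun y hy i hi => mem_fixedCoords.1 hi y ?_).trans
      (Nat.pow_le_pow_right card_pos (Nat.sub_le_sub_left (hmin y₁ (mem_univ _)) _))
    have hΦ : Φ y = Φ y₁ := (mem_filter.1 hy).2.trans (mem_filter.1 hy₁).2.symm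
    simp only [Φ, Prod.mk.injEq] at hΦ
    obtain ⟨he, hT⟩ := hΦ
    rw [he] at hT
    exact congrFun hT
  have key := card_le_mul_card_image_of_maps_to (fun y _ => mem_univ (Φ y)) _ hfiber
  have hsplit : card α ^ card ι = card α ^ (card ι - M) * card α ^ M := by
    rw [← pow_add, Nat.sub_add_cancel (card_le_univ _)]
  rw [card_univ, card_univ, card_fun, card_prod, card_fun, card_fun, Fintype.card_fin,
    hsplit] at key
  exact Nat.le_of_mul_le_mul_left key (Nat.pow_pos card_pos)

lemma bvTest_mem_fixedCoords {n m t : ℕ} {T : (Fin n → Bool) → κ → σ} {y : Fin n → Bool}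
    {u : Fin m → Fin n} {P : Finset κ}
    (hP : ∀ y', (∀ i ∈ P, T y' i = T y i) →
      bvTest n m ((u, y ∘ u), y') = bvTest n m ((u, y ∘ u), y))
    {e : Fin t → κ} (he : ↑P ⊆ Set.range e) (j : Fin m) : u j ∈ fixedCoords T y e := by
  refine mem_fixedCoords.2 fun y' hy' => ?_
  have hans := hP y' fun i hi => by
    obtain ⟨k, rfl⟩ := he hi
    exact hy' k
  simp only [bvTest, Function.comp_apply, implies_true, if_true, ite_eq_left_iff, zero_ne_one,
    imp_false, not_not] at hans
  exact hans j

lemma bvTest_exists_cells [Nonempty κ] {n m t : ℕ} {T : (Fin n → Bool) → κ → σ}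
    (hT : ∀ x y, ∃ P : Finset κ, #P ≤ t ∧
      ∀ y', (∀ i ∈ P, T y' i = T y i) → bvTest n m (x, y') = bvTest n m (x, y))
    (y : Fin n → Bool) (u : Fin m → Fin n) :
    ∃ e : Fin t → κ, ∀ j, u j ∈ fixedCoords T y e := by
  obtain ⟨P, hPt, hP⟩ := hT (u, y ∘ u) y
  obtain ⟨e, he⟩ := exists_fin_range_superset hPt
  exact ⟨e, bvTest_mem_fixedCoords hP he⟩

end CellCode

section Bounds

open Real

lemma logb_natCast_nonneg {b : ℝ} (hb : 1 ≤ b) (n : ℕ) : 0 ≤ logb b n :=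
  div_nonneg (log_natCast_nonneg n) (log_nonneg hb)

lemma rpow_one_sub_lt_of_pow_le {n m s t F : ℕ} {δ : ℝ} (hF : n ^ m ≤ F ^ m * s ^ t)
    (hst : t * logb 2 s < δ * m * logb 2 n) : (n : ℝ) ^ (1 - δ) < F := by
  have hlog_pos : 0 < δ * m * logb 2 n :=
    (mul_nonneg (Nat.cast_nonneg t) (logb_natCast_nonneg one_le_two s)).trans_lt hst
  have hm : m ≠ 0 := by rintro rfl; simp at hlog_pos
  have hn : n ≠ 0 := by rintro rfl; simp at hlog_pos
  have hprod : 0 < F ^ m * s ^ t := (Nat.pow_pos (Nat.pos_of_ne_zero hn)).trans_le hF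
  have hF0 : F ≠ 0 := by rintro rfl; simp [hm] at hprod
  have hs0 : s ^ t ≠ 0 := (Nat.pos_of_mul_pos_left hprod).ne'
  have hlog := logb_le_logb_of_le (b := 2) one_lt_two (by positivity)
    (by exact_mod_cast hF : ((n : ℝ) ^ m ≤ (F : ℝ) ^ m * (s : ℝ) ^ t))
  rw [logb_mul (by positivity) (by exact_mod_cast hs0), logb_pow, logb_pow, logb_pow] at hlog
  have hmul : (m : ℝ) * ((1 - δ) * logb 2 n) < m * logb 2 F := by linarith
  rw [← logb_lt_logb_iff (b := 2) one_lt_two (by positivity) (by positivity),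
    logb_rpow_eq_mul_logb_of_pos (by positivity)]
  exact lt_of_mul_lt_mul_left hmul (Nat.cast_nonneg m)

lemma le_mul_logb_of_two_pow_le {s w t F : ℕ} (hF : 2 ^ F ≤ s ^ t * (2 ^ w) ^ t) :
    (F : ℝ) ≤ t * (w + logb 2 s) := by
  have hs0 : s ^ t ≠ 0 := fun h => by simp [h] at hF
  have hlog := logb_le_logb_of_le (b := 2) one_lt_two (by positivity)
    (by exact_mod_cast hF : ((2 : ℝ) ^ F ≤ (s : ℝ) ^ t * ((2 : ℝ) ^ w) ^ t))
  rw [logb_mul (by exact_mod_cast hs0) (by positivity), logb_pow, logb_pow, logb_pow, logb_pow,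
    logb_self_eq_one one_lt_two] at hlog
  linarith

end Bounds

theorem bvTest_certificate_lower_bound_general (n m s w t : ℕ)
    (hcert : HasCertificates (bvTest n m) s w t) :
    ∀ δ : ℝ, 0 < δ → δ < 1 →
      (n : ℝ) ^ ((1 : ℝ) - δ) / ((w : ℝ) + Real.logb 2 s) ≤ (t : ℝ) ∨
      δ * m * Real.logb 2 n / Real.logb 2 s ≤ (t : ℝ) := by
  intro δ _ _
  refine or_iff_not_imp_right.2 fun hsmall => ?_
  have hlogs : 0 < Real.logb 2 s := (logb_natCast_nonneg one_le_two s).lt_of_ne fun h => by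
    simp [← h] at hsmall
  have hst : t * Real.logb 2 s < δ * m * Real.logb 2 n := (lt_div_iff₀ hlogs).1 (not_le.1 hsmall)
  have : Nonempty (Fin s) :=
    Fin.pos_iff_nonempty.1 (Nat.pos_of_ne_zero fun h => by simp [h] at hlogs)
  obtain ⟨T, hT⟩ := hcert
  choose e he using fun y => exists_cells_card_pow_le T y (bvTest_exists_cells hT y)
  obtain ⟨y, hy⟩ := exists_pow_card_fixedCoords_le T e
  simp only [Fintype.card_fin, Fintype.card_bool, Fintype.card_fun] at he hy
  rw [div_le_iff₀ (add_pos_of_nonneg_of_pos (Nat.cast_nonneg w) hlogs)]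
  exact (rpow_one_sub_lt_of_pow_le (he y) hst).le.trans (le_mul_logb_of_two_pow_le hy)

/-- Certificate lower bound for bit-vector testing: if it has `(s,w,t)`-certificates,
then for every `0 < δ < 1`, either `t ≥ n^{1−δ}/(w + log₂ s)` or
`t ≥ δ·m·log₂ n / log₂ s`. -/
theorem bvTest_certificate_lower_bound (n m s w t : ℕ)
    (hn : 1 ≤ n) (hm : 1 ≤ m) (hs : 2 ≤ s) (hw : 1 ≤ w) (ht : 1 ≤ t) (hts : t ≤ s)
    (hcert : HasCertificates (bvTest n m) s w t) :
    ∀ δ : ℝ, 0 < δ → δ < 1 →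
      (n : ℝ) ^ ((1 : ℝ) - δ) / ((w : ℝ) + Real.logb 2 s) ≤ (t : ℝ) ∨
      δ * m * Real.logb 2 n / Real.logb 2 s ≤ (t : ℝ) :=
  bvTest_certificate_lower_bound_general n m s w t hcert
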